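/- Let α, β be real numbers with α > 1 and β > 1. If α^n − β^n is an integer for every n ≥ n_0 (for some n_0), then either α = β, or both α and β are integers. -/

import Mathlib

/-!
Write `uₙ = αⁿ - βⁿ`. The identity `uₙ₊₂ uₙ - uₙ₊₁² = -(αβ)ⁿ (α - β)²` makes `αβ` a ratio of two
integers, the recursion `uₙ₊₂ = (α + β) uₙ₊₁ - αβ uₙ` then makes `α + β` rational, hence so are the
power sums `αⁿ + βⁿ`, and therefore `αⁿ`, `αⁿ⁺¹` and `α = αⁿ⁺¹ / αⁿ`. For rationals `a ≠ b` the
integrality of `aⁿ - bⁿ` forces a common denominator `c`, and then `cⁿ ∣ num a - num b ≠ 0` for all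
large `n`, so `c = 1`.
-/

theorem pow_add_pow_mem {R S : Type*} [CommRing R] [SetLike S R] [SubringClass S R] (s : S)
    {x y : R} (hs : x + y ∈ s) (hp : x * y ∈ s) (n : ℕ) : x ^ n + y ^ n ∈ s := by
  induction n using Nat.twoStepInduction with
  | zero => simpa only [pow_zero] using add_mem (one_mem s) (one_mem s)
  | one => simpa only [pow_one] using hs
  | more n ih₀ ih₁ =>
    have e : x ^ (n + 2) + y ^ (n + 2) =
        (x + y) * (x ^ (n + 1) + y ^ (n + 1)) - x * y * (x ^ n + y ^ n) := by ring
    rw [e]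
    exact sub_mem (mul_mem hs ih₁) (mul_mem hp ih₀)

section Subfield

variable {F : Type*} [Field F] (K : Subfield F) {x y : F} {n₀ : ℕ}

theorem mul_mem_of_pow_sub_pow_mem (hx : x ≠ 0) (hy : y ≠ 0) (hxy : x ≠ y)
    (h : ∀ n ≥ n₀, x ^ n - y ^ n ∈ K) : x * y ∈ K := by
  set v : ℕ → F := fun n ↦
    (x ^ (n + 2) - y ^ (n + 2)) * (x ^ n - y ^ n) - (x ^ (n + 1) - y ^ (n + 1)) ^ 2
  have hv : ∀ n, v n = -((x * y) ^ n * (x - y) ^ 2) := fun n ↦ by simp only [v]; ring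
  have hvK : ∀ n ≥ n₀, v n ∈ K := fun n hn ↦
    sub_mem (mul_mem (h _ (by omega)) (h n hn)) (pow_mem (h _ (by omega)) 2)
  have hv₀ : v n₀ ≠ 0 := by
    rw [hv]
    exact neg_ne_zero.2 <|
      mul_ne_zero (pow_ne_zero _ (mul_ne_zero hx hy)) (pow_ne_zero _ (sub_ne_zero.2 hxy))
  have e : x * y = v (n₀ + 1) / v n₀ := by
    rw [eq_div_iff hv₀, hv, hv]
    ring
  rw [e]
  exact div_mem (hvK _ (by omega)) (hvK _ le_rfl)

theorem add_mem_of_pow_sub_pow_mem (hp : x * y ∈ K) (hne : x ^ (n₀ + 1) ≠ y ^ (n₀ + 1))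
    (h : ∀ n ≥ n₀, x ^ n - y ^ n ∈ K) : x + y ∈ K := by
  have e : x + y =
      (x ^ (n₀ + 2) - y ^ (n₀ + 2) + x * y * (x ^ n₀ - y ^ n₀)) / (x ^ (n₀ + 1) - y ^ (n₀ + 1)) := by
    rw [eq_div_iff (sub_ne_zero.2 hne)]
    ring
  rw [e]
  exact div_mem (add_mem (h _ (by omega)) (mul_mem hp (h _ le_rfl))) (h _ (by omega))

theorem mem_of_pow_sub_pow_mem [NeZero (2 : F)] (hs : x + y ∈ K) (hp : x * y ∈ K) (hx : x ≠ 0)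
    {n : ℕ} (h₀ : x ^ n - y ^ n ∈ K) (h₁ : x ^ (n + 1) - y ^ (n + 1) ∈ K) : x ∈ K := by
  have hpow : ∀ m, x ^ m - y ^ m ∈ K → x ^ m ∈ K := fun m hm ↦ by
    have e : x ^ m = (x ^ m + y ^ m + (x ^ m - y ^ m)) / 2 := by
      field_simp
      ring
    rw [e]
    exact div_mem (add_mem (pow_add_pow_mem K hs hp m) hm) (ofNat_mem K 2)
  have e : x = x ^ (n + 1) / x ^ n := by rw [pow_succ, mul_div_cancel_left₀ _ (pow_ne_zero _ hx)]
  rw [e]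
  exact div_mem (hpow _ h₁) (hpow _ h₀)

theorem mem_and_mem_of_pow_sub_pow_mem [NeZero (2 : F)] (hx : x ≠ 0) (hy : y ≠ 0)
    (hxy : ∀ n ≠ 0, x ^ n ≠ y ^ n) (h : ∀ n ≥ n₀, x ^ n - y ^ n ∈ K) : x ∈ K ∧ y ∈ K := by
  have hp := mul_mem_of_pow_sub_pow_mem K hx hy (by simpa using hxy 1 one_ne_zero) h
  have hs := add_mem_of_pow_sub_pow_mem K hp (hxy _ n₀.succ_ne_zero) h
  have h₀ := h n₀ le_rfl
  have h₁ := h (n₀ + 1) (by omega)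
  refine ⟨mem_of_pow_sub_pow_mem K hs hp hx h₀ h₁, ?_⟩
  rw [add_comm] at hs
  rw [mul_comm] at hp
  exact mem_of_pow_sub_pow_mem K hs hp hy (by simpa only [neg_sub] using neg_mem h₀)
    (by simpa only [neg_sub] using neg_mem h₁)

end Subfield

theorem IsCoprime.pow_dvd_sub_of_pow_dvd_pow_sub_pow {R : Type*} [CommRing R] {a b c : R} {n : ℕ}
    (hcb : IsCoprime c b) (h₀ : c ^ n ∣ a ^ n - b ^ n) (h₁ : c ^ n ∣ a ^ (n + 1) - b ^ (n + 1)) :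
    c ^ n ∣ a - b := by
  have e : b ^ n * (a - b) = a ^ (n + 1) - b ^ (n + 1) - a * (a ^ n - b ^ n) := by ring
  have hdvd : c ^ n ∣ b ^ n * (a - b) := e ▸ dvd_sub h₁ (dvd_mul_of_dvd_right h₀ a)
  exact hcb.pow.dvd_of_dvd_mul_left hdvd

theorem Int.natAbs_eq_one_of_pow_dvd {c m : ℤ} (hm : m ≠ 0) {n₀ : ℕ} (h : ∀ n ≥ n₀, c ^ n ∣ m) :
    c.natAbs = 1 := by
  by_contra hc
  obtain ⟨k, hk⟩ := Int.finiteMultiplicity_iff.2 ⟨hc, hm⟩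
  exact hk ((pow_dvd_pow c (Nat.le_add_right (k + 1) n₀)).trans (h _ (by omega)))

namespace Rat

theorem den_eq_den_of_pow_sub_pow_eq_intCast {a b : ℚ} {n : ℕ} {z : ℤ} (hn : n ≠ 0)
    (h : a ^ n - b ^ n = z) : a.den = b.den := by
  apply Nat.pow_left_injective hn
  simp only [← den_pow, sub_eq_iff_eq_add.1 h, intCast_add_den]

theorem den_pow_dvd_num_pow_sub_num_pow {a b : ℚ} (hden : a.den = b.den) {n : ℕ} {z : ℤ}
    (h : a ^ n - b ^ n = z) : (a.den : ℤ) ^ n ∣ a.num ^ n - b.num ^ n := by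
  refine ⟨z, ?_⟩
  have e : ((a.num ^ n - b.num ^ n : ℤ) : ℚ) = (a.den : ℚ) ^ n * z := by
    push_cast
    rw [← mul_den_eq_num a, ← mul_den_eq_num b, ← hden, ← h]
    ring
  exact_mod_cast e

theorem den_eq_one_of_pow_sub_pow_int {a b : ℚ} (hab : a ≠ b) {n₀ : ℕ}
    (h : ∀ n ≥ n₀, ∃ z : ℤ, a ^ n - b ^ n = z) : a.den = 1 ∧ b.den = 1 := by
  obtain ⟨z, hz⟩ := h (n₀ + 1) (by omega)
  have hden := den_eq_den_of_pow_sub_pow_eq_intCast n₀.succ_ne_zero hz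
  have hcop : IsCoprime (a.den : ℤ) b.num := hden ▸ b.isCoprime_num_den.symm
  have hdvd : ∀ n ≥ n₀, (a.den : ℤ) ^ n ∣ a.num - b.num := fun n hn ↦ by
    obtain ⟨z₀, h₀⟩ := h n hn
    obtain ⟨z₁, h₁⟩ := h (n + 1) (by omega)
    exact hcop.pow_dvd_sub_of_pow_dvd_pow_sub_pow (den_pow_dvd_num_pow_sub_num_pow hden h₀)
      ((pow_dvd_pow _ n.le_succ).trans (den_pow_dvd_num_pow_sub_num_pow hden h₁))
  have hnum : a.num - b.num ≠ 0 := sub_ne_zero.2 fun e ↦ hab (Rat.ext e hden)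
  have ha : a.den = 1 := by simpa using Int.natAbs_eq_one_of_pow_dvd hnum hdvd
  exact ⟨ha, hden ▸ ha⟩

end Rat

theorem eq_or_int_of_pow_sub_pow_int
    (α β : ℝ) (hα : 1 < α) (hβ : 1 < β) (n₀ : ℕ)
    (h : ∀ n : ℕ, n₀ ≤ n → ∃ z : ℤ, α ^ n - β ^ n = z) :
    α = β ∨ ((∃ a : ℤ, α = a) ∧ (∃ b : ℤ, β = b)) := by
  rcases eq_or_ne α β with hαβ | hαβ
  · exact Or.inl hαβ
  have hα₀ : 0 < α := one_pos.trans hα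
  have hβ₀ : 0 < β := one_pos.trans hβ
  have hpow : ∀ n ≠ 0, α ^ n ≠ β ^ n := fun n hn ↦ (pow_left_inj₀ hα₀.le hβ₀.le hn).not.2 hαβ
  obtain ⟨⟨a, rfl⟩, ⟨b, rfl⟩⟩ := mem_and_mem_of_pow_sub_pow_mem (Rat.castHom ℝ).fieldRange
    hα₀.ne' hβ₀.ne' hpow fun n hn ↦ by obtain ⟨z, hz⟩ := h n hn; exact hz ▸ intCast_mem _ z
  simp only [Rat.coe_castHom] at h hαβ ⊢
  have hq : ∀ n ≥ n₀, ∃ z : ℤ, a ^ n - b ^ n = z := fun n hn ↦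
    (h n hn).imp fun z hz ↦ by exact_mod_cast hz
  obtain ⟨ha, hb⟩ := Rat.den_eq_one_of_pow_sub_pow_int (fun e ↦ hαβ (congrArg _ e)) hq
  exact Or.inr ⟨⟨a.num, by exact_mod_cast (Rat.coe_int_num_of_den_eq_one ha).symm⟩,
    ⟨b.num, by exact_mod_cast (Rat.coe_int_num_of_den_eq_one hb).symm⟩⟩
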